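/- Let λ, α, M > 0 with M ≤ √(λ/α), and let h(x) = αx² + η(|x| ≤ M). Then sup_{v ∈ ℝ}(x·v − max(h*(v) − λ, 0)) = (αM + λ/M)|x| + η(|x| ≤ M) for all x ∈ ℝ. -/

import Mathlib

open Classical

noncomputable section

/-- Convex conjugate of a function `ℝ → EReal`. -/
def conj (ω : ℝ → EReal) (v : ℝ) : EReal := ⨆ x : ℝ, ((v * x : ℝ) : EReal) - ω x

/-- Convex indicator: `0` if the condition holds, `⊤` otherwise. -/
def ind (p : Prop) : EReal := if p then 0 else ⊤

/-! With `K = α M + λ / M`, the inequality `M (v t - α t² - λ) ≤ |t| (M |v| - α M² - λ)` for `|t| ≤ M`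
(valid since `α M² ≤ λ`), together with the choice `t = ±M`, gives
`max (h*(v) - λ) 0 = M (|v| - K)₊`. The outer supremum is the conjugate of this hinge: it is `K |x|`
for `|x| ≤ M`, attained at `v = ±K`, and `+∞` for `|x| > M`, where `v = ±t` with `t → ∞` wins. -/

lemma exists_abs_eq_and_mul_eq (x : ℝ) {r : ℝ} (hr : 0 ≤ r) : ∃ v, |v| = r ∧ x * v = r * |x| := by
  rcases le_total 0 x with hx | hx
  · exact ⟨r, abs_of_nonneg hr, by rw [abs_of_nonneg hx, mul_comm]⟩
  · exact ⟨-r, by rw [abs_neg, abs_of_nonneg hr], by rw [abs_of_nonpos hx]; ring⟩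

def boxedQuadratic (α M t : ℝ) : EReal := ((α * t ^ 2 : ℝ) : EReal) + ind (|t| ≤ M)

section BoxedQuadratic

variable {α M lam : ℝ}

lemma le_conj_boxedQuadratic (hM : 0 ≤ M) (v : ℝ) :
    ((M * |v| - α * M ^ 2 : ℝ) : EReal) ≤ conj (boxedQuadratic α M) v := by
  obtain ⟨t, ht, hvt⟩ := exists_abs_eq_and_mul_eq v hM
  refine le_iSup_of_le t (le_of_eq ?_)
  rw [boxedQuadratic, ind, if_pos ht.le, add_zero, ← EReal.coe_sub, hvt, ← sq_abs t, ht]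

lemma mul_sub_mul_sq_le (hα : 0 ≤ α) (hM : 0 < M) (hαM : α * M ^ 2 ≤ lam) {t : ℝ}
    (ht : |t| ≤ M) (v : ℝ) :
    v * t - α * t ^ 2 ≤ lam + max (M * |v| - α * M ^ 2 - lam) 0 := by
  set m := max (M * |v| - α * M ^ 2 - lam) 0
  have hvt : v * t ≤ |v| * |t| := (le_abs_self _).trans (abs_mul v t).le
  have hdefect : 0 ≤ (M - |t|) * (lam - α * M * |t|) :=
    mul_nonneg (sub_nonneg.2 ht) (by nlinarith [mul_le_mul_of_nonneg_left ht (mul_nonneg hα hM.le)])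
  -- the defect is `M (|v||t| - v t) + (M - |t|)(λ - α M |t|)`
  have hkey : M * (v * t - α * t ^ 2 - lam) ≤ |t| * (M * |v| - α * M ^ 2 - lam) := by
    rw [← sq_abs t]
    nlinarith [mul_le_mul_of_nonneg_left hvt hM.le]
  have hm : |t| * (M * |v| - α * M ^ 2 - lam) ≤ M * m :=
    (mul_le_mul_of_nonneg_left (le_max_left _ _) (abs_nonneg t)).trans
      (mul_le_mul_of_nonneg_right ht (le_max_right _ _))
  nlinarith

lemma conj_boxedQuadratic_sub_le (hα : 0 ≤ α) (hM : 0 < M) (hαM : α * M ^ 2 ≤ lam) (v : ℝ) :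
    conj (boxedQuadratic α M) v - lam ≤ ((max (M * |v| - α * M ^ 2 - lam) 0 : ℝ) : EReal) := by
  have hconj : conj (boxedQuadratic α M) v ≤ ((lam + max (M * |v| - α * M ^ 2 - lam) 0 : ℝ) : EReal) := by
    refine iSup_le fun t => ?_
    by_cases ht : |t| ≤ M
    · rw [boxedQuadratic, ind, if_pos ht, add_zero, ← EReal.coe_sub, EReal.coe_le_coe_iff]
      exact mul_sub_mul_sq_le hα hM hαM ht v
    · rw [boxedQuadratic, ind, if_neg ht, EReal.coe_add_top, EReal.sub_top]
      exact bot_le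
  calc conj (boxedQuadratic α M) v - lam
      ≤ ((lam + max (M * |v| - α * M ^ 2 - lam) 0 : ℝ) : EReal) - lam := EReal.sub_le_sub hconj le_rfl
    _ = _ := by rw [← EReal.coe_sub, add_sub_cancel_left]

lemma max_conj_boxedQuadratic_sub_eq (hα : 0 ≤ α) (hM : 0 < M) (hαM : α * M ^ 2 ≤ lam) (v : ℝ) :
    max (conj (boxedQuadratic α M) v - lam) 0
      = ((M * max (|v| - (α * M + lam / M)) 0 : ℝ) : EReal) := by
  have hmax : M * max (|v| - (α * M + lam / M)) 0 = max (M * |v| - α * M ^ 2 - lam) 0 := by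
    rw [mul_max_of_nonneg _ _ hM.le, mul_zero]
    congr 1
    field_simp
    ring
  rw [hmax]
  refine le_antisymm (max_le (conj_boxedQuadratic_sub_le hα hM hαM v) ?_) ?_
  · exact EReal.coe_nonneg.2 (le_max_right _ _)
  · rw [EReal.coe_strictMono.monotone.map_max, EReal.coe_zero]
    refine max_le_max ?_ le_rfl
    rw [EReal.coe_sub]
    exact EReal.sub_le_sub (le_conj_boxedQuadratic hM.le v) le_rfl

end BoxedQuadratic

section Hinge

variable {x M K : ℝ}

lemma mul_sub_mul_max_abs_sub_le (hx : |x| ≤ M) (v : ℝ) :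
    x * v - M * max (|v| - K) 0 ≤ K * |x| := by
  have hxv : x * v ≤ |x| * |v| := (le_abs_self _).trans (abs_mul x v).le
  have hv : |v| ≤ K + max (|v| - K) 0 := by linarith [le_max_left (|v| - K) 0]
  nlinarith [mul_le_mul_of_nonneg_left hv (abs_nonneg x),
    mul_le_mul_of_nonneg_right hx (le_max_right (|v| - K) 0)]

lemma exists_lt_mul_sub_mul_max_abs_sub (hx : M < |x|) (hK : 0 ≤ K) (y : ℝ) :
    ∃ v, y < x * v - M * max (|v| - K) 0 := by
  have hxM : 0 < |x| - M := sub_pos.2 hx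
  set s := (|y| + 1) / (|x| - M)
  have hs : 0 ≤ s := by positivity
  obtain ⟨v, hv, hxv⟩ := exists_abs_eq_and_mul_eq x (add_nonneg hK hs)
  refine ⟨v, ?_⟩
  have hvalue : x * v - M * max (|v| - K) 0 = K * |x| + (|y| + 1) := by
    have hsx : s * (|x| - M) = |y| + 1 := div_mul_cancel₀ _ hxM.ne'
    rw [hxv, hv, add_sub_cancel_left, max_eq_left hs]
    linear_combination hsx
  rw [hvalue]
  nlinarith [le_abs_self y, abs_nonneg x]

lemma iSup_mul_sub_mul_max_abs_sub (hK : 0 ≤ K) :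
    ⨆ v : ℝ, ((x * v - M * max (|v| - K) 0 : ℝ) : EReal) = ((K * |x| : ℝ) : EReal) + ind (|x| ≤ M) := by
  by_cases hx : |x| ≤ M
  · rw [ind, if_pos hx, add_zero]
    refine le_antisymm (iSup_le fun v => EReal.coe_le_coe_iff.2 (mul_sub_mul_max_abs_sub_le hx v)) ?_
    obtain ⟨v, hv, hxv⟩ := exists_abs_eq_and_mul_eq x hK
    refine le_iSup_of_le v (le_of_eq ?_)
    rw [hxv, hv, sub_self, max_self, mul_zero, sub_zero]
  · rw [ind, if_neg hx, EReal.coe_add_top, EReal.eq_top_iff_forall_lt]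
    intro y
    obtain ⟨v, hv⟩ := exists_lt_mul_sub_mul_max_abs_sub (not_le.1 hx) hK y
    exact lt_iSup_iff.2 ⟨v, EReal.coe_lt_coe_iff.2 hv⟩

end Hinge

theorem stmt_16_general (lam α M : ℝ) (hα : 0 < α) (hM : 0 < M)
    (hMle : M ≤ Real.sqrt (lam / α)) :
    ∀ x : ℝ,
      (⨆ v : ℝ,
          ((x * v : ℝ) : EReal)
            - max (conj (fun t => ((α * t ^ 2 : ℝ) : EReal) + ind (|t| ≤ M)) v
                - (lam : EReal)) 0)
        = (((α * M + lam / M) * |x| : ℝ) : EReal) + ind (|x| ≤ M) := by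
  intro x
  have hαM : α * M ^ 2 ≤ lam := by
    rw [← le_div_iff₀' hα, ← Real.le_sqrt' hM]
    exact hMle
  have hK : 0 ≤ α * M + lam / M := by
    have : 0 ≤ lam := (by positivity : 0 ≤ α * M ^ 2).trans hαM
    positivity
  rw [← iSup_mul_sub_mul_max_abs_sub hK]
  refine iSup_congr fun v => ?_
  rw [EReal.coe_sub, ← max_conj_boxedQuadratic_sub_eq hα.le hM hαM v]
  rfl

theorem stmt_16 (lam α M : ℝ) (hlam : 0 < lam) (hα : 0 < α) (hM : 0 < M)
    (hMle : M ≤ Real.sqrt (lam / α)) :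
    ∀ x : ℝ,
      (⨆ v : ℝ,
          ((x * v : ℝ) : EReal)
            - max (conj (fun t => ((α * t ^ 2 : ℝ) : EReal) + ind (|t| ≤ M)) v
                - (lam : EReal)) 0)
        = (((α * M + lam / M) * |x| : ℝ) : EReal) + ind (|x| ≤ M) :=
  stmt_16_general lam α M hα hM hMle
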